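/- Suppose a group Γ acts harmonically on a graph G of genus 1 and the quotient G/Γ also has genus 1. Then the ramification number R = 0 (the quotient map G → G/Γ is unramified), Γ is a cyclic group acting by rotations of the unique cycle of G, and |Γ| is a strict divisor of the number of vertices in the unique cycle of G. -/

import Mathlib

open scoped Classical

/-- A finite connected multigraph without loop edges. -/
structure Multigraph where
  V : Type
  E : Type
  [fintypeV : Fintype V]
  [fintypeE : Fintype E]
  ends : E → Sym2 V
  loopless : ∀ e : E, ¬ (ends e).IsDiag
  connected : (SimpleGraph.fromRel fun x y : V => ∃ e : E, ends e = s(x, y)).Connected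

attribute [instance] Multigraph.fintypeV Multigraph.fintypeE

namespace Multigraph

/-- The genus (first Betti number, cyclomatic number) of a multigraph. -/
def genus (G : Multigraph) : ℤ :=
  (Fintype.card G.E : ℤ) - (Fintype.card G.V : ℤ) + 1

/-- A cycle in a multigraph, given as a nonempty set of edges such that every vertex is
incident to either 0 or 2 of its edges. -/
def IsCycleSet (G : Multigraph) (C : Set G.E) : Prop :=
  C.Nonempty ∧ ∀ x : G.V,
    Nat.card {e : G.E // e ∈ C ∧ x ∈ G.ends e} = 0 ∨
    Nat.card {e : G.E // e ∈ C ∧ x ∈ G.ends e} = 2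

end Multigraph

/-- A morphism of multigraphs: vertices go to vertices, and each edge goes either to an
edge joining the images of its endpoints, or to the common image of its endpoints
(in which case the edge is *vertical*). -/
structure Morphism (G G' : Multigraph) where
  vmap : G.V → G'.V
  emap : G.E → G'.E ⊕ G'.V
  compat : ∀ e : G.E,
    (∀ e', emap e = Sum.inl e' → G'.ends e' = (G.ends e).map vmap) ∧
    (∀ v, emap e = Sum.inr v → (G.ends e).map vmap = Sym2.diag v)

namespace Morphism

/-- A morphism is harmonic if for every vertex `x`, the number of edges incident to `x`
mapping to a given edge `e'` incident to `φ(x)` is independent of the choice of `e'`. -/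
def Harmonic {G G' : Multigraph} (φ : Morphism G G') : Prop :=
  ∀ (x : G.V) (e₁ e₂ : G'.E), φ.vmap x ∈ G'.ends e₁ → φ.vmap x ∈ G'.ends e₂ →
    Nat.card {e : G.E // x ∈ G.ends e ∧ φ.emap e = Sum.inl e₁} =
    Nat.card {e : G.E // x ∈ G.ends e ∧ φ.emap e = Sum.inl e₂}

/-- A morphism is nonconstant if its image is not a single vertex. -/
def Nonconstant {G G' : Multigraph} (φ : Morphism G G') : Prop :=
  ∃ x y : G.V, φ.vmap x ≠ φ.vmap y

/-- Composition of morphisms of multigraphs. -/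
def comp {G₁ G₂ G₃ : Multigraph} (ψ : Morphism G₂ G₃) (φ : Morphism G₁ G₂) :
    Morphism G₁ G₃ where
  vmap := ψ.vmap ∘ φ.vmap
  emap e := Sum.elim ψ.emap (fun v => Sum.inr (ψ.vmap v)) (φ.emap e)
  compat e := by
    constructor
    · intro e'' h
      rcases hφ : φ.emap e with e' | v
      · simp only [hφ, Sum.elim_inl] at h
        have h1 := (φ.compat e).1 e' hφ
        have h2 := (ψ.compat e').1 e'' h
        rw [h2, h1, Sym2.map_map]
      · simp only [hφ, Sum.elim_inr] at h
        simp at h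
    · intro v h
      rcases hφ : φ.emap e with e' | v₀
      · simp only [hφ, Sum.elim_inl] at h
        have h1 := (φ.compat e).1 e' hφ
        have h2 := (ψ.compat e').2 v h
        rw [← Sym2.map_map, ← h1]
        exact h2
      · simp only [hφ, Sum.elim_inr, Sum.inr.injEq] at h
        have h1 := (φ.compat e).2 v₀ hφ
        subst h
        rw [← Sym2.map_map, h1]
        rfl
end Morphism

/-- A group of automorphisms of a multigraph `G` (a faithful action of `Γ` on `G` by
automorphisms, i.e. a subgroup of `Aut(G)`). -/
structure GraphAction (Γ : Type) [Group Γ] (G : Multigraph) where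
  actV : Γ →* Equiv.Perm G.V
  actE : Γ →* Equiv.Perm G.E
  ends_map : ∀ (γ : Γ) (e : G.E), G.ends (actE γ e) = (G.ends e).map (actV γ)
  faithful : ∀ γ : Γ, (∀ x : G.V, actV γ x = x) → (∀ e : G.E, actE γ e = e) → γ = 1

namespace GraphAction

variable {Γ : Type} [Group Γ] {G : Multigraph}

/-- Two vertices lie in the same `Δ`-orbit. -/
def vrel (A : GraphAction Γ G) (Δ : Subgroup Γ) (x y : G.V) : Prop :=
  ∃ δ ∈ Δ, A.actV δ x = y

/-- Two edges lie in the same `Δ`-orbit. -/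
def erel (A : GraphAction Γ G) (Δ : Subgroup Γ) (e f : G.E) : Prop :=
  ∃ δ ∈ Δ, A.actE δ e = f

/-- The setoid of `Δ`-orbits of vertices. -/
def vSetoid (A : GraphAction Γ G) (Δ : Subgroup Γ) : Setoid G.V where
  r := A.vrel Δ
  iseqv := by
    constructor
    · intro x; exact ⟨1, Δ.one_mem, by simp⟩
    · rintro x y ⟨δ, hδ, h⟩
      refine ⟨δ⁻¹, Δ.inv_mem hδ, ?_⟩
      rw [map_inv, ← h]
      exact Equiv.symm_apply_apply _ _
    · rintro x y z ⟨δ₁, h1, e1⟩ ⟨δ₂, h2, e2⟩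
      refine ⟨δ₂ * δ₁, Δ.mul_mem h2 h1, ?_⟩
      rw [map_mul]
      simp [Equiv.Perm.mul_apply, e1, e2]

/-- The setoid of `Δ`-orbits of edges. -/
def eSetoid (A : GraphAction Γ G) (Δ : Subgroup Γ) : Setoid G.E where
  r := A.erel Δ
  iseqv := by
    constructor
    · intro e; exact ⟨1, Δ.one_mem, by simp⟩
    · rintro e f ⟨δ, hδ, h⟩
      refine ⟨δ⁻¹, Δ.inv_mem hδ, ?_⟩
      rw [map_inv, ← h]
      exact Equiv.symm_apply_apply _ _
    · rintro e f k ⟨δ₁, h1, e1⟩ ⟨δ₂, h2, e2⟩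
      refine ⟨δ₂ * δ₁, Δ.mul_mem h2 h1, ?_⟩
      rw [map_mul]
      simp [Equiv.Perm.mul_apply, e1, e2]

/-- An edge is `Δ`-vertical if its two endpoints lie in the same `Δ`-orbit (so it is
contracted by the quotient morphism `G → G/Δ`). -/
def Vertical (A : GraphAction Γ G) (Δ : Subgroup Γ) (e : G.E) : Prop :=
  ∃ x y : G.V, G.ends e = s(x, y) ∧ A.vrel Δ x y

/-- The vertex set of the quotient graph `G/Δ`: the `Δ`-orbits of vertices. -/
abbrev quotV (A : GraphAction Γ G) (Δ : Subgroup Γ) : Type :=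
  Quotient (A.vSetoid Δ)

/-- The edge set of the quotient graph `G/Δ`: the `Δ`-orbits of non-vertical edges. -/
abbrev quotE (A : GraphAction Γ G) (Δ : Subgroup Γ) : Type :=
  Quotient ((A.eSetoid Δ).comap (Subtype.val : {e : G.E // ¬ A.Vertical Δ e} → G.E))

/-- The genus of the quotient graph `G/Δ`. -/
noncomputable def quotGenus (A : GraphAction Γ G) (Δ : Subgroup Γ) : ℤ :=
  (Nat.card (A.quotE Δ) : ℤ) - (Nat.card (A.quotV Δ) : ℤ) + 1

/-- The order of the stabilizer `Δ_x` of a vertex `x`. -/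
noncomputable def stabOrder (A : GraphAction Γ G) (Δ : Subgroup Γ) (x : G.V) : ℕ :=
  Nat.card {γ : Γ // γ ∈ Δ ∧ A.actV γ x = x}

/-- The vertical multiplicity of a vertex `x`: the number of `Δ`-vertical edges
incident to `x`. -/
noncomputable def vertMult (A : GraphAction Γ G) (Δ : Subgroup Γ) (x : G.V) : ℕ :=
  Nat.card {e : G.E // x ∈ G.ends e ∧ A.Vertical Δ e}

/-- `r_y = |Δ_x|` for a vertex `y` of the quotient `G/Δ` and any `x` in the fiber over `y`. -/
noncomputable def r (A : GraphAction Γ G) (Δ : Subgroup Γ) (y : A.quotV Δ) : ℕ :=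
  A.stabOrder Δ (Quotient.out y)

/-- `w_y = v(x)/|Δ_x|` for a vertex `y` of the quotient `G/Δ` and any `x` in the fiber. -/
noncomputable def w (A : GraphAction Γ G) (Δ : Subgroup Γ) (y : A.quotV Δ) : ℕ :=
  A.vertMult Δ (Quotient.out y) / A.r Δ y

/-- The ramification number `R = Σ_y [2(1 - 1/r_y) + w_y]` of the quotient map `G → G/Δ`. -/
noncomputable def ram (A : GraphAction Γ G) (Δ : Subgroup Γ) : ℚ :=
  ∑ᶠ y : A.quotV Δ, (2 * (1 - 1 / (A.r Δ y : ℚ)) + (A.w Δ y : ℚ))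

/-- A vertex `y` of the quotient `G/Δ` is a branch point if `2(1 - 1/r_y) + w_y > 0`. -/
def IsBranch (A : GraphAction Γ G) (Δ : Subgroup Γ) (y : A.quotV Δ) : Prop :=
  0 < 2 * (1 - 1 / (A.r Δ y : ℚ)) + (A.w Δ y : ℚ)

/-- The quotient morphism `φ_Δ : G → G/Δ` is harmonic: for every vertex `x` of `G` and
every pair of quotient edges incident to the image of `x`, the numbers of preimages
incident to `x` agree. -/
def QuotHarmonic (A : GraphAction Γ G) (Δ : Subgroup Γ) : Prop :=
  ∀ (x : G.V) (e₁ e₂ : G.E), ¬ A.Vertical Δ e₁ → ¬ A.Vertical Δ e₂ →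
    (∃ v ∈ G.ends e₁, A.vrel Δ x v) → (∃ v ∈ G.ends e₂, A.vrel Δ x v) →
    Nat.card {e : G.E // x ∈ G.ends e ∧ A.erel Δ e e₁} =
    Nat.card {e : G.E // x ∈ G.ends e ∧ A.erel Δ e e₂}

/-- The quotient morphism `φ_Δ : G → G/Δ` is non-degenerate: no neighborhood `x(1)` is
contracted to a vertex, i.e. every vertex has a neighbor outside its `Δ`-orbit. -/
def QuotNondeg (A : GraphAction Γ G) (Δ : Subgroup Γ) : Prop :=
  ∀ x : G.V, ∃ e : G.E, x ∈ G.ends e ∧ ∃ y ∈ G.ends e, ¬ A.vrel Δ x y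

/-- `Γ` acts harmonically on `G` if for every subgroup `Δ ≤ Γ` the quotient morphism
`φ_Δ : G → G/Δ` is harmonic and non-degenerate. -/
def ActsHarmonically (A : GraphAction Γ G) : Prop :=
  ∀ Δ : Subgroup Γ, A.QuotHarmonic Δ ∧ A.QuotNondeg Δ

/-- The quotient map `G → G/Δ` is horizontally unramified: all vertex stabilizers in `Δ`
are trivial. -/
def HorizUnramified (A : GraphAction Γ G) (Δ : Subgroup Γ) : Prop :=
  ∀ (x : G.V) (γ : Γ), γ ∈ Δ → A.actV γ x = x → γ = 1

end GraphAction

/-- `M g` is the maximal order of a group acting harmonically on a graph of genus `g`. -/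
noncomputable def M (g : ℕ) : ℕ :=
  sSup {n : ℕ | ∃ (Γ : Type) (i : Group Γ) (G : Multigraph) (A : @GraphAction Γ i G),
    @GraphAction.ActsHarmonically Γ i G A ∧ G.genus = (g : ℤ) ∧ Nat.card Γ = n}

/-!
For a harmonic action, an element fixing a non-vertical edge fixes its endpoints, then
(harmonicity at a fixed vertex) every edge there, and by connectivity everything: it is trivial.
So `Γ` acts freely on non-vertical edges and `|E| = |E_vert| + |Γ| |E(G/Γ)|`, while
`|V| ≤ |Γ| |V(G/Γ)|`. Both genera being 1 forces no vertical edges and free vertex orbits, which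
gives `R = 0`.

The mod-2 cycle space of `G` has dimension `g(G) = 1`, so `G` has exactly one cycle `C`, which is
therefore `Γ`-invariant and connected. On the darts of `C`, `Γ` commutes with the two involutions
"other end of the edge" and "other edge at the vertex", whose dihedral group is transitive. An
element mapping a dart to its image under a reflection would fix a vertex or reverse an edge, so
`Γ` embeds into the rotations, a cyclic group. Finally `Γ` acts freely on the vertices of `C` with
at least two orbits (the ends of an edge), whence `|Γ|` is a strict divisor of their number.
-/

section OrbitCounting

variable {Γ α : Type*} (s : Setoid α) (f : Γ → α → α)

theorem surjective_apply_out (hs : ∀ a b, s a b ↔ ∃ γ, f γ a = b) :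
    Function.Surjective fun p : Quotient s × Γ => f p.2 p.1.out := by
  intro a
  obtain ⟨γ, hγ⟩ := (hs _ a).1 (Quotient.mk_out a)
  exact ⟨(Quotient.mk s a, γ), hγ⟩

theorem card_eq_card_quotient_mul (hs : ∀ a b, s a b ↔ ∃ γ, f γ a = b)
    (hinj : ∀ a, Function.Injective (f · a)) :
    Nat.card α = Nat.card (Quotient s) * Nat.card Γ := by
  rw [← Nat.card_prod]
  refine (Nat.card_eq_of_bijective _ ⟨?_, surjective_apply_out s f hs⟩).symm
  rintro ⟨q, γ⟩ ⟨q', γ'⟩ h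
  have hq : q = q' := by
    rw [← q.out_eq, ← q'.out_eq]
    exact Quotient.sound
      (s.trans ((hs _ _).2 ⟨γ, rfl⟩) (s.symm ((hs _ _).2 ⟨γ', h.symm⟩)))
  subst hq
  exact Prod.ext rfl (hinj _ h)

variable [Finite Γ] [Finite α]

theorem card_le_card_quotient_mul (hs : ∀ a b, s a b ↔ ∃ γ, f γ a = b) :
    Nat.card α ≤ Nat.card (Quotient s) * Nat.card Γ := by
  rw [← Nat.card_prod]
  exact Nat.card_le_card_of_surjective _ (surjective_apply_out s f hs)

theorem injective_of_card_eq_card_quotient_mul [Group Γ]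
    (hs : ∀ a b, s a b ↔ ∃ γ, f γ a = b) (hmul : ∀ γ δ a, f (γ * δ) a = f γ (f δ a))
    (hcard : Nat.card α = Nat.card (Quotient s) * Nat.card Γ) (a : α) :
    Function.Injective (f · a) := by
  have hbij : Function.Bijective fun p : Quotient s × Γ => f p.2 p.1.out := by
    rw [Nat.bijective_iff_surjective_and_card, Nat.card_prod, hcard]
    exact ⟨surjective_apply_out s f hs, rfl⟩
  obtain ⟨γ₀, hγ₀⟩ := (hs _ a).1 (Quotient.mk_out a)
  intro γ δ h
  have : (Quotient.mk s a, γ * γ₀) = (Quotient.mk s a, δ * γ₀) :=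
    hbij.1 (by simp only [hmul, hγ₀]; exact h)
  simpa using congrArg Prod.snd this

end OrbitCounting

section Dihedral

variable {Γ X : Type*} [Group Γ] [MulAction Γ X]

theorem smul_zpow_apply_comm {π : Equiv.Perm X}
    (hcomm : ∀ (γ : Γ) (x : X), γ • π x = π (γ • x)) (γ : Γ) (j : ℤ) (x : X) :
    γ • (π ^ j) x = (π ^ j) (γ • x) :=
  Equiv.ext_iff.1 ((show Commute (MulAction.toPerm γ) π from Equiv.ext (hcomm γ)).zpow_right j) x

theorem isCyclic_of_forall_smul_eq_zpow_apply (π : Equiv.Perm X) (x₀ : X)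
    (hcomm : ∀ (γ : Γ) (x : X), γ • π x = π (γ • x))
    (hfree : ∀ γ : Γ, γ • x₀ = x₀ → γ = 1)
    (horb : ∀ γ : Γ, ∃ k : ℤ, γ • x₀ = (π ^ k) x₀) : IsCyclic Γ := by
  choose k hk using horb
  have hzpow (a b : ℤ) :
      (π ^ a) x₀ = (π ^ b) x₀ ↔ (a : ZMod (MulAction.period π x₀)) = b := by
    rw [ZMod.intCast_eq_intCast_iff_dvd_sub, ← MulAction.zpow_smul_eq_iff_period_dvd,
      ← neg_add_eq_sub, zpow_add, zpow_neg, Equiv.Perm.smul_def, Equiv.Perm.mul_apply,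
      Equiv.Perm.inv_eq_iff_eq, eq_comm]
  let φ : Γ →* Multiplicative (ZMod (MulAction.period π x₀)) :=
    { toFun γ := .ofAdd (k γ)
      map_one' := by
        rw [← ofAdd_zero, ← Int.cast_zero]
        exact congrArg _ ((hzpow _ _).1 (by rw [← hk, one_smul, zpow_zero]; rfl))
      map_mul' γ δ := by
        rw [← ofAdd_add, ← Int.cast_add]
        refine congrArg _ ((hzpow _ _).1 ?_)
        rw [← hk, mul_smul, hk δ, smul_zpow_apply_comm hcomm, hk γ, ← Equiv.Perm.mul_apply, ← zpow_add,
          add_comm] }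
  refine isCyclic_of_injective φ ((injective_iff_map_eq_one φ).2 fun γ hγ => hfree γ ?_)
  rw [hk, (hzpow _ 0).2 (by simpa using ofAdd_eq_one.1 hγ), zpow_zero]
  rfl

theorem semiconjBy_zpow_of_mul_self {G : Type*} [Group G] {σ τ : G} (hσ : σ * σ = 1)
    (hτ : τ * τ = 1) (k : ℤ) :
    SemiconjBy τ ((σ * τ) ^ k) ((σ * τ) ^ (-k)) ∧
      SemiconjBy σ ((σ * τ) ^ k) ((σ * τ) ^ (-k)) := by
  have hσ' : σ⁻¹ = σ := inv_eq_of_mul_eq_one_right hσ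
  have hτ' : τ⁻¹ = τ := inv_eq_of_mul_eq_one_right hτ
  rw [zpow_neg, ← inv_zpow]
  constructor <;> refine SemiconjBy.zpow_right ?_ k <;>
    rw [SemiconjBy, mul_inv_rev, hσ', hτ']
  · simp only [mul_assoc]
  · rw [← mul_assoc, hσ, one_mul, mul_assoc, hσ, mul_one]

def dihedralOrbit (σ τ : Equiv.Perm X) (x₀ : X) : Set X :=
  {x | ∃ k : ℤ, x = ((σ * τ) ^ k) x₀ ∨ x = ((σ * τ) ^ k) (τ x₀)}

theorem self_mem_dihedralOrbit (σ τ : Equiv.Perm X) (x₀ : X) :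
    x₀ ∈ dihedralOrbit σ τ x₀ :=
  ⟨0, Or.inl rfl⟩

theorem apply_mem_dihedralOrbit {σ τ : Equiv.Perm X} (hσ : σ * σ = 1) (hτ : τ * τ = 1)
    {x₀ x : X} (hx : x ∈ dihedralOrbit σ τ x₀) :
    τ x ∈ dihedralOrbit σ τ x₀ ∧ σ x ∈ dihedralOrbit σ τ x₀ := by
  have hττ (y : X) : τ (τ y) = y := by rw [← Equiv.Perm.mul_apply, hτ]; rfl
  obtain ⟨k, rfl | rfl⟩ := hx
  all_goals
    obtain ⟨hτk, hσk⟩ := semiconjBy_zpow_of_mul_self hσ hτ k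
    rw [← Equiv.Perm.mul_apply τ, ← Equiv.Perm.mul_apply σ, hτk.eq, hσk.eq]
  · refine ⟨⟨-k, Or.inr rfl⟩, ⟨-k + 1, Or.inr ?_⟩⟩
    simp only [zpow_add_one, Equiv.Perm.mul_apply, hττ]
  · refine ⟨⟨-k, Or.inl ?_⟩, ⟨-k + 1, Or.inl ?_⟩⟩ <;>
      simp only [zpow_add_one, Equiv.Perm.mul_apply, hττ]

theorem isCyclic_of_forall_mem_dihedralOrbit (σ τ : Equiv.Perm X) (hσ : σ * σ = 1)
    (hτ : τ * τ = 1) (hσc : ∀ (γ : Γ) (x : X), γ • σ x = σ (γ • x))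
    (hτc : ∀ (γ : Γ) (x : X), γ • τ x = τ (γ • x)) (x₀ : X)
    (htrans : ∀ x, x ∈ dihedralOrbit σ τ x₀) (hfree : ∀ γ : Γ, γ • x₀ = x₀ → γ = 1)
    (hσ' : ∀ (γ : Γ) (x : X), γ • x ≠ σ x)
    (hτ' : ∀ (γ : Γ) (x : X), γ • x ≠ τ x) :
    IsCyclic Γ := by
  have hcomm (γ : Γ) (x : X) : γ • (σ * τ) x = (σ * τ) (γ • x) := by
    simp only [Equiv.Perm.mul_apply, hσc, hτc]
  refine isCyclic_of_forall_smul_eq_zpow_apply (σ * τ) x₀ hcomm hfree fun γ => ?_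
  obtain ⟨k, hk | hk⟩ := htrans (γ • x₀)
  · exact ⟨k, hk⟩
  exfalso
  -- If `γ • x₀ = (σ τ)^(2j) ρ x₀` for a reflection `ρ ∈ {τ, σ}`, then `γ` agrees with `ρ` at
  -- `(σ τ)^(-j) x₀`; odd powers reduce to this case via `(σ τ)^(2j+1) τ = (σ τ)^(2j) σ`.
  have hreflect (ρ : Equiv.Perm X) (j : ℤ)
      (hρ : SemiconjBy ρ ((σ * τ) ^ (-j)) ((σ * τ) ^ (- -j)))
      (hγ : γ • x₀ = ((σ * τ) ^ (2 * j) * ρ) x₀) :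
      γ • ((σ * τ) ^ (-j)) x₀ = ρ (((σ * τ) ^ (-j)) x₀) := by
    rw [smul_zpow_apply_comm hcomm, hγ, ← Equiv.Perm.mul_apply, ← Equiv.Perm.mul_apply ρ,
      hρ.eq, ← mul_assoc, ← zpow_add, neg_neg]
    congr 3; ring
  obtain ⟨j, rfl | rfl⟩ := Int.even_or_odd' k
  · exact hτ' γ _ (hreflect τ j (semiconjBy_zpow_of_mul_self hσ hτ _).1 hk)
  · refine hσ' γ _ (hreflect σ j (semiconjBy_zpow_of_mul_self hσ hτ _).2 ?_)
    rw [hk, ← Equiv.Perm.mul_apply, zpow_add_one, mul_assoc, mul_assoc, hτ, mul_one]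

end Dihedral

section Incidence

variable {ε ν : Type*} [Fintype ε] (inc : ε → ν → Prop)

noncomputable def incidenceBoundary : (ε → ZMod 2) →ₗ[ZMod 2] (ν → ZMod 2) :=
  Matrix.mulVecLin (Matrix.of fun x e => if inc e x then 1 else 0)

theorem incidenceBoundary_apply (u : ε → ZMod 2) (x : ν) :
    incidenceBoundary inc u x = ∑ e, if inc e x then u e else 0 := by
  simp [incidenceBoundary, Matrix.mulVec, dotProduct, ite_mul]

variable [Fintype ν]

variable (ν) in
noncomputable def augmentation : (ν → ZMod 2) →ₗ[ZMod 2] ZMod 2 :=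
  ∑ x, LinearMap.proj x

theorem augmentation_apply (w : ν → ZMod 2) : augmentation ν w = ∑ x, w x := by
  simp [augmentation]

theorem finrank_ker_augmentation_add_one [Nonempty ν] :
    Module.finrank (ZMod 2) (LinearMap.ker (augmentation ν)) + 1 = Nat.card ν := by
  have hsurj : Function.Surjective (augmentation ν) := fun c =>
    ⟨Pi.single (Classical.arbitrary ν) c, by simp [augmentation_apply]⟩
  have := LinearMap.finrank_range_add_finrank_ker (augmentation ν)
  rw [LinearMap.range_eq_top.2 hsurj, finrank_top, Module.finrank_self,
    Module.finrank_fintype_fun_eq_card] at this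
  rw [Nat.card_eq_fintype_card]
  omega

theorem range_incidenceBoundary_le (h2 : ∀ e, Nat.card {x // inc e x} = 2) :
    LinearMap.range (incidenceBoundary inc) ≤ LinearMap.ker (augmentation ν) := by
  rintro _ ⟨u, rfl⟩
  have h2' (e : ε) : ∑ x, (if inc e x then u e else 0) = 0 := by
    rw [Finset.sum_ite, Finset.sum_const_zero, add_zero, Finset.sum_const, ← Fintype.card_subtype,
      ← Nat.card_eq_fintype_card, h2, two_nsmul, ZModModule.add_self]
  simp only [LinearMap.mem_ker, augmentation_apply, incidenceBoundary_apply]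
  rw [Finset.sum_comm]
  exact Finset.sum_eq_zero fun e _ => h2' e

theorem card_add_one_le_finrank_ker_add_card [Nonempty ν]
    (h2 : ∀ e, Nat.card {x // inc e x} = 2) :
    Nat.card ε + 1 ≤
      Module.finrank (ZMod 2) (LinearMap.ker (incidenceBoundary inc)) + Nat.card ν := by
  have hrank := LinearMap.finrank_range_add_finrank_ker (incidenceBoundary inc)
  have hle := Submodule.finrank_mono (range_incidenceBoundary_le inc h2)
  have := finrank_ker_augmentation_add_one (ν := ν)
  rw [Module.finrank_fintype_fun_eq_card, ← Nat.card_eq_fintype_card] at hrank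
  omega

theorem sum_card_incident (h2 : ∀ e, Nat.card {x // inc e x} = 2) :
    ∑ x, Nat.card {e // inc e x} = 2 * Nat.card ε := by
  simp only [Nat.card_eq_fintype_card, Fintype.card_subtype, Finset.card_filter]
  rw [Finset.sum_comm]
  simp only [← Finset.card_filter, ← Fintype.card_subtype, ← Nat.card_eq_fintype_card, h2,
    Finset.sum_const, Finset.card_univ, smul_eq_mul, mul_comm]

theorem two_le_finrank_ker_incidenceBoundary [Nonempty ν] (h2 : ∀ e, Nat.card {x // inc e x} = 2)
    (hdeg : ∀ x, 2 ≤ Nat.card {e // inc e x}) (x₀ : ν)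
    (h4 : 4 ≤ Nat.card {e // inc e x₀}) :
    2 ≤ Module.finrank (ZMod 2) (LinearMap.ker (incidenceBoundary inc)) := by
  have hsum : ∑ x : ν, (2 + if x = x₀ then 2 else 0) ≤ 2 * Nat.card ε := by
    rw [← sum_card_incident inc h2]
    refine Finset.sum_le_sum fun x _ => ?_
    split_ifs with hx
    · exact hx ▸ h4
    · simpa using hdeg x
  simp only [Finset.sum_add_distrib, Finset.sum_ite_eq', Finset.mem_univ, if_true,
    Finset.sum_const, Finset.card_univ, smul_eq_mul, ← Nat.card_eq_fintype_card] at hsum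
  have := card_add_one_le_finrank_ker_add_card inc h2
  omega

end Incidence

theorem ZMod.two_eq_zero_or_eq_one : ∀ a : ZMod 2, a = 0 ∨ a = 1 := by
  decide

theorem eq_of_finrank_le_one {M : Type*} [AddCommGroup M] [Module (ZMod 2) M]
    [FiniteDimensional (ZMod 2) M] {p : Submodule (ZMod 2) M}
    (hp : Module.finrank (ZMod 2) p ≤ 1) {u v : M} (hu : u ∈ p) (hv : v ∈ p) (hu0 : u ≠ 0)
    (hv0 : v ≠ 0) : u = v := by
  obtain ⟨w, hw⟩ := finrank_le_one_iff.1 hp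
  have h (x : M) (hx : x ∈ p) (hx0 : x ≠ 0) : x = w := by
    obtain ⟨c, hc⟩ := hw ⟨x, hx⟩
    rcases ZMod.two_eq_zero_or_eq_one c with rfl | rfl
    · exact absurd (by simpa using congrArg Subtype.val hc.symm) hx0
    · simpa using congrArg Subtype.val hc.symm
  rw [h u hu hu0, h v hv hv0]

namespace Multigraph

variable (G : Multigraph)

theorem exists_ends_eq (e : G.E) : ∃ x y, x ≠ y ∧ G.ends e = s(x, y) := by
  induction h : G.ends e using Sym2.ind with
  | h x y => exact ⟨x, y, fun hxy => G.loopless e (h ▸ Sym2.mk_isDiag_iff.2 hxy), rfl⟩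

theorem card_mem_ends (e : G.E) : Nat.card {x // x ∈ G.ends e} = 2 := by
  obtain ⟨x, y, hxy, he⟩ := G.exists_ends_eq e
  rw [he, Nat.card_eq_two_iff]
  refine ⟨⟨x, Sym2.mem_mk_left x y⟩, ⟨y, Sym2.mem_mk_right x y⟩,
    fun h => hxy (congrArg Subtype.val h), ?_⟩
  ext ⟨z, hz⟩
  simpa [Sym2.mem_iff] using hz

theorem edge_induction {P : G.V → Prop} {x₀ : G.V} (h₀ : P x₀)
    (hstep : ∀ e x y, G.ends e = s(x, y) → P x → P y) (x : G.V) : P x := by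
  obtain ⟨p⟩ := G.connected.preconnected x₀ x
  induction p with
  | nil => exact h₀
  | cons hadj _ ih =>
    obtain ⟨-, ⟨e, he⟩ | ⟨e, he⟩⟩ := hadj
    · exact ih (hstep e _ _ he h₀)
    · exact ih (hstep e _ _ (he.trans Sym2.eq_swap) h₀)

noncomputable def boundary : (G.E → ZMod 2) →ₗ[ZMod 2] (G.V → ZMod 2) :=
  incidenceBoundary fun e x => x ∈ G.ends e

theorem boundary_single {e : G.E} {x y : G.V} (he : G.ends e = s(x, y)) :
    G.boundary (Pi.single e 1) = Pi.single x 1 + Pi.single y 1 := by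
  have hxy : x ≠ y := fun h => G.loopless e (he ▸ Sym2.mk_isDiag_iff.2 h)
  ext z
  rw [boundary, incidenceBoundary_apply, Finset.sum_eq_single e (fun f _ hf => by simp [hf])
    (by simp)]
  by_cases hzx : z = x <;> by_cases hzy : z = y <;> simp_all

theorem single_sub_single_mem_range_boundary (x y : G.V) :
    Pi.single y 1 - Pi.single x 1 ∈ LinearMap.range G.boundary := by
  refine G.edge_induction
    (P := fun y => Pi.single y (1 : ZMod 2) - Pi.single x 1 ∈ LinearMap.range G.boundary)
    (x₀ := x) (by simp) (fun e y z he hy => ?_) y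
  have : Pi.single z 1 - Pi.single x 1 = (Pi.single y 1 - Pi.single x 1 : G.V → ZMod 2) +
      G.boundary (Pi.single e 1) := by
    rw [G.boundary_single he, sub_add_eq_add_sub, ← add_assoc, ZModModule.add_self, zero_add]
  rw [this]
  exact add_mem hy ⟨_, rfl⟩

theorem range_boundary : LinearMap.range G.boundary = LinearMap.ker (augmentation G.V) := by
  refine le_antisymm (range_incidenceBoundary_le _ G.card_mem_ends) fun w hw => ?_
  obtain ⟨x₀⟩ := G.connected.nonempty
  have : w = ∑ x, w x • (Pi.single x 1 - Pi.single x₀ 1) := by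
    rw [LinearMap.mem_ker, augmentation_apply] at hw
    ext y
    simp [smul_sub, Finset.sum_sub_distrib, hw, Pi.single_apply]
  rw [this]
  exact Submodule.sum_mem _ fun x _ =>
    Submodule.smul_mem _ _ (G.single_sub_single_mem_range_boundary _ _)

theorem finrank_ker_boundary :
    (Module.finrank (ZMod 2) (LinearMap.ker G.boundary) : ℤ) = G.genus := by
  have hrank := LinearMap.finrank_range_add_finrank_ker G.boundary
  have := G.connected.nonempty
  have haug := finrank_ker_augmentation_add_one (ν := G.V)
  rw [range_boundary, Module.finrank_fintype_fun_eq_card] at hrank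
  rw [genus, ← Nat.card_eq_fintype_card (α := G.V), ← haug]
  push_cast
  omega

variable {G}

theorem boundary_apply_eq_card (u : G.E → ZMod 2) (x : G.V) :
    G.boundary u x = Nat.card {e // u e ≠ 0 ∧ x ∈ G.ends e} := by
  rw [boundary, incidenceBoundary_apply, Nat.card_eq_fintype_card, Fintype.card_subtype,
    Finset.natCast_card_filter]
  refine Finset.sum_congr rfl fun e _ => ?_
  rcases ZMod.two_eq_zero_or_eq_one (u e) with h | h <;> simp [h]

theorem even_card_of_mem_ker {u : G.E → ZMod 2} (hu : u ∈ LinearMap.ker G.boundary) (x : G.V) :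
    Even (Nat.card {e // u e ≠ 0 ∧ x ∈ G.ends e}) := by
  rw [← ZMod.natCast_eq_zero_iff_even, ← boundary_apply_eq_card, LinearMap.mem_ker.1 hu]
  rfl

theorem IsCycleSet.indicator_mem_ker {C : Set G.E} (hC : G.IsCycleSet C) :
    C.indicator 1 ∈ LinearMap.ker G.boundary := by
  ext x
  rw [boundary_apply_eq_card]
  have : Nat.card {e // C.indicator (1 : G.E → ZMod 2) e ≠ 0 ∧ x ∈ G.ends e} =
      Nat.card {e // e ∈ C ∧ x ∈ G.ends e} :=
    Nat.card_congr (Equiv.subtypeEquivRight fun e => by simp [Set.indicator_apply])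
  rcases hC.2 x with h | h <;> rw [this, h] <;> rfl

theorem IsCycleSet.eq (hg : G.genus ≤ 1) {C₁ C₂ : Set G.E} (h₁ : G.IsCycleSet C₁)
    (h₂ : G.IsCycleSet C₂) : C₁ = C₂ := by
  have hne {C : Set G.E} (hC : G.IsCycleSet C) : C.indicator (1 : G.E → ZMod 2) ≠ 0 := by
    obtain ⟨e, he⟩ := hC.1
    exact Function.ne_iff.2 ⟨e, by simp [he]⟩
  have hdim : Module.finrank (ZMod 2) (LinearMap.ker G.boundary) ≤ 1 := by
    have := G.finrank_ker_boundary
    omega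
  exact Set.indicator_one_inj (ZMod 2) (eq_of_finrank_le_one hdim h₁.indicator_mem_ker
    h₂.indicator_mem_ker (hne h₁) (hne h₂))

theorem finrank_ker_subgraph_le (p : G.E → Prop) [DecidablePred p] :
    Module.finrank (ZMod 2) (LinearMap.ker (incidenceBoundary
      fun (e : {e // p e}) (x : {x // ∃ e, p e ∧ x ∈ G.ends e}) => x.1 ∈ G.ends e.1)) ≤
    Module.finrank (ZMod 2) (LinearMap.ker G.boundary) := by
  let ext := Function.ExtendByZero.linearMap (ZMod 2) (Subtype.val : {e // p e} → G.E)
  refine LinearMap.finrank_le_finrank_of_injective (f := ext.restrict fun w hw => ?_)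
    fun a b h => Subtype.ext (Function.extend_injective Subtype.val_injective
      (0 : G.E → ZMod 2) (congrArg Subtype.val h))
  ext x
  rw [boundary, incidenceBoundary_apply, Pi.zero_apply, ← Fintype.sum_subtype_add_sum_subtype p]
  have hoff (e : {e // ¬p e}) : ext w e.1 = 0 :=
    Function.extend_apply' _ _ _ fun ⟨a, ha⟩ => e.2 (ha ▸ a.2)
  have hon (e : {e // p e}) : ext w e.1 = w e := Subtype.val_injective.extend_apply _ _ _
  simp only [hoff, hon, ite_self, Finset.sum_const_zero, add_zero]
  by_cases hx : ∃ e, p e ∧ x ∈ G.ends e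
  · have := congrFun (LinearMap.mem_ker.1 hw) ⟨x, hx⟩
    rw [incidenceBoundary_apply, Pi.zero_apply] at this
    convert this using 4
  · exact Finset.sum_eq_zero fun e _ => if_neg fun hxe => hx ⟨e.1, e.2, hxe⟩

theorem two_le_finrank_ker_boundary {u : G.E → ZMod 2} (hu : u ∈ LinearMap.ker G.boundary)
    {x₀ : G.V} (h4 : 4 ≤ Nat.card {e // u e ≠ 0 ∧ x₀ ∈ G.ends e}) :
    2 ≤ Module.finrank (ZMod 2) (LinearMap.ker G.boundary) := by
  let V' := {x // ∃ e, u e ≠ 0 ∧ x ∈ G.ends e}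
  let inc (e : {e // u e ≠ 0}) (x : V') : Prop := x.1 ∈ G.ends e.1
  have hdeg (x : V') : Nat.card {e // inc e x} = Nat.card {e // u e ≠ 0 ∧ x.1 ∈ G.ends e} :=
    Nat.card_congr (Equiv.subtypeSubtypeEquivSubtypeInter _ (x.1 ∈ G.ends ·))
  have h2 (e : {e // u e ≠ 0}) : Nat.card {x // inc e x} = 2 :=
    (Nat.card_congr (Equiv.subtypeSubtypeEquivSubtype
      (p := fun x => ∃ e, u e ≠ 0 ∧ x ∈ G.ends e) fun hx => ⟨e.1, e.2, hx⟩)).trans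
      (G.card_mem_ends e.1)
  obtain ⟨⟨e₀, he₀⟩⟩ :=
    (Nat.card_pos_iff.1 (by omega : 0 < Nat.card {e // u e ≠ 0 ∧ x₀ ∈ G.ends e})).1
  have : Nonempty V' := ⟨⟨x₀, e₀, he₀⟩⟩
  refine (two_le_finrank_ker_incidenceBoundary inc h2 (fun x => ?_) ⟨x₀, e₀, he₀⟩
    (by rw [hdeg]; exact h4)).trans (G.finrank_ker_subgraph_le (u · ≠ 0))
  obtain ⟨e, he⟩ := x.2
  obtain ⟨k, hk⟩ := even_card_of_mem_ker hu x.1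
  have : 0 < Nat.card {e // u e ≠ 0 ∧ x.1 ∈ G.ends e} :=
    Nat.card_pos_iff.2 ⟨⟨⟨e, he⟩⟩, inferInstance⟩
  rw [hdeg]
  omega

theorem isCycleSet_support (hg : G.genus ≤ 1) {u : G.E → ZMod 2}
    (hu : u ∈ LinearMap.ker G.boundary) (hu0 : u ≠ 0) : G.IsCycleSet {e | u e ≠ 0} := by
  refine ⟨Function.ne_iff.1 hu0, fun x => ?_⟩
  have hdim : Module.finrank (ZMod 2) (LinearMap.ker G.boundary) ≤ 1 := by
    have := G.finrank_ker_boundary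
    omega
  have h4 := mt (two_le_finrank_ker_boundary hu (x₀ := x)) (by omega)
  obtain ⟨k, hk⟩ := even_card_of_mem_ker hu x
  show Nat.card {e // u e ≠ 0 ∧ x ∈ G.ends e} = 0 ∨
    Nat.card {e // u e ≠ 0 ∧ x ∈ G.ends e} = 2
  omega

theorem exists_isCycleSet (hg : G.genus = 1) : ∃ C, G.IsCycleSet C := by
  have hdim : Module.finrank (ZMod 2) (LinearMap.ker G.boundary) = 1 := by
    have := G.finrank_ker_boundary
    omega
  obtain ⟨⟨u, hu⟩, hu0⟩ := Module.finrank_pos_iff_exists_ne_zero.1 (hdim ▸ Nat.one_pos)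
  exact ⟨_, isCycleSet_support hg.le hu (by simpa using hu0)⟩

variable {C : Set G.E}

theorem IsCycleSet.card_incident_eq_two (hC : G.IsCycleSet C) {e : G.E} (he : e ∈ C) {x : G.V}
    (hx : x ∈ G.ends e) : Nat.card {f // f ∈ C ∧ x ∈ G.ends f} = 2 :=
  (hC.2 x).resolve_left (Nat.card_pos_iff.2 ⟨⟨⟨e, he, hx⟩⟩, inferInstance⟩).ne'

@[ext]
structure Dart (G : Multigraph) (C : Set G.E) where
  vertex : G.V
  edge : G.E
  edge_mem : edge ∈ C
  vertex_mem : vertex ∈ G.ends edge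

namespace Dart

noncomputable def flipVertex (d : Dart G C) : Dart G C :=
  ⟨Sym2.Mem.other d.vertex_mem, d.edge, d.edge_mem, Sym2.other_mem d.vertex_mem⟩

theorem eq_or_eq_flipVertex {d d' : Dart G C} (h : d.edge = d'.edge) :
    d = d' ∨ d = d'.flipVertex := by
  have : d.vertex ∈ s(d'.vertex, Sym2.Mem.other d'.vertex_mem) := by
    rw [Sym2.other_spec, ← h]
    exact d.vertex_mem
  rcases Sym2.mem_iff.1 this with hv | hv
  · exact Or.inl (Dart.ext hv h)
  · exact Or.inr (Dart.ext hv h)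

theorem flipVertex_ne (d : Dart G C) : d.flipVertex ≠ d := fun h =>
  Sym2.other_ne (G.loopless d.edge) d.vertex_mem (congrArg vertex h)

theorem flipVertex_flipVertex (d : Dart G C) : d.flipVertex.flipVertex = d :=
  (eq_or_eq_flipVertex (d := d.flipVertex.flipVertex) (d' := d) rfl).resolve_right
    (flipVertex_ne _)

theorem exists_unique_ne_edge (hC : G.IsCycleSet C) (d : Dart G C) :
    ∃! f : {f // f ∈ C ∧ d.vertex ∈ G.ends f},
      f ≠ ⟨d.edge, d.edge_mem, d.vertex_mem⟩ :=
  (Nat.card_eq_two_iff' _).1 (hC.card_incident_eq_two d.edge_mem d.vertex_mem)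

noncomputable def flipEdge (hC : G.IsCycleSet C) (d : Dart G C) : Dart G C :=
  let f := (exists_unique_ne_edge hC d).exists.choose
  ⟨d.vertex, f.1, f.2.1, f.2.2⟩

variable (hC : G.IsCycleSet C)

theorem flipEdge_ne (d : Dart G C) : d.flipEdge hC ≠ d := fun h =>
  (exists_unique_ne_edge hC d).exists.choose_spec (Subtype.ext (congrArg edge h))

theorem eq_or_eq_flipEdge {d d' : Dart G C} (h : d.vertex = d'.vertex) :
    d = d' ∨ d = d'.flipEdge hC := by
  by_cases he : d.edge = d'.edge
  · exact Or.inl (Dart.ext h he)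
  · refine Or.inr (Dart.ext h ?_)
    have := (exists_unique_ne_edge hC d').unique
      (y₁ := ⟨d.edge, d.edge_mem, h ▸ d.vertex_mem⟩)
      (fun h' => he (congrArg Subtype.val h')) (exists_unique_ne_edge hC d').exists.choose_spec
    exact congrArg Subtype.val this

theorem flipEdge_flipEdge (d : Dart G C) : (d.flipEdge hC).flipEdge hC = d :=
  (eq_or_eq_flipEdge hC (d := (d.flipEdge hC).flipEdge hC) (d' := d) rfl).resolve_right
    (flipEdge_ne hC _)

/-- The edges of such a set of darts form a cycle inside `C`, equal to `C` by uniqueness. -/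
theorem mem_of_flip_closed (hg : G.genus ≤ 1) {O : Set (Dart G C)} (hne : O.Nonempty)
    (hτ : ∀ d ∈ O, d.flipVertex ∈ O) (hσ : ∀ d ∈ O, d.flipEdge hC ∈ O)
    (d : Dart G C) :
    d ∈ O := by
  have hmem (d : Dart G C) (hd : d.edge ∈ edge '' O) : d ∈ O := by
    obtain ⟨d', hd', he⟩ := hd
    rcases eq_or_eq_flipVertex he.symm with rfl | rfl
    exacts [hd', hτ _ hd']
  have hC' : G.IsCycleSet (edge '' O) := by
    obtain ⟨d₀, hd₀⟩ := hne
    refine ⟨⟨d₀.edge, d₀, hd₀, rfl⟩, fun x => ?_⟩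
    by_cases hx : IsEmpty {f // f ∈ edge '' O ∧ x ∈ G.ends f}
    · exact Or.inl Nat.card_of_isEmpty
    obtain ⟨⟨_, ⟨d₁, hd₁, rfl⟩, hx₁⟩⟩ := not_isEmpty_iff.1 hx
    have hd₂ : (⟨x, d₁.edge, d₁.edge_mem, hx₁⟩ : Dart G C) ∈ O :=
      hmem _ ⟨d₁, hd₁, rfl⟩
    have hiff (f : G.E) : f ∈ edge '' O ∧ x ∈ G.ends f ↔ f ∈ C ∧ x ∈ G.ends f := by
      refine ⟨fun ⟨⟨d, _, hd⟩, hxf⟩ => ⟨hd ▸ d.edge_mem, hxf⟩,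
        fun ⟨hf, hxf⟩ => ⟨?_, hxf⟩⟩
      rcases eq_or_eq_flipEdge hC (d := ⟨x, f, hf, hxf⟩)
        (d' := ⟨x, d₁.edge, d₁.edge_mem, hx₁⟩) rfl with h | h
      exacts [⟨_, hd₂, congrArg edge h.symm⟩, ⟨_, hσ _ hd₂, congrArg edge h.symm⟩]
    rw [Nat.card_congr (Equiv.subtypeEquivRight hiff)]
    exact hC.2 x
  exact hmem d ((hC'.eq hg hC).symm ▸ d.edge_mem)

end Dart

end Multigraph

namespace GraphAction

variable {Γ : Type} [Group Γ] {G : Multigraph}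

theorem finite (A : GraphAction Γ G) : Finite Γ := by
  refine Finite.of_injective (fun γ => (A.actV γ, A.actE γ)) fun γ δ h => ?_
  obtain ⟨hV, hE⟩ := Prod.mk.inj h
  refine mul_inv_eq_one.1 (A.faithful _ (fun x => ?_) fun e => ?_)
  · simp [hV]
  · simp [hE]

variable (A : GraphAction Γ G)

theorem mem_ends_actE_iff {γ : Γ} {e : G.E} {x : G.V} :
    A.actV γ x ∈ G.ends (A.actE γ e) ↔ x ∈ G.ends e := by
  rw [A.ends_map, Sym2.mem_map]
  exact ⟨fun ⟨y, hy, hyx⟩ => (A.actV γ).injective hyx ▸ hy, fun hx => ⟨x, hx, rfl⟩⟩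

theorem actV_eq_self_of_actE_eq_self {γ : Γ} {e : G.E} {x y : G.V} (he : G.ends e = s(x, y))
    (hfix : A.actE γ e = e) (hx : A.actV γ x = x) : A.actV γ y = y := by
  have : s(A.actV γ x, A.actV γ y) = s(x, y) := by
    rw [← Sym2.map_mk, ← he, ← A.ends_map, hfix]
  rw [hx] at this
  rcases Sym2.eq_iff.1 this with ⟨-, h⟩ | ⟨h₁, h₂⟩
  · exact h
  · exact h₂.trans h₁

theorem actV_eq_self_of_not_vertical {γ : Γ} {e : G.E} (hv : ¬A.Vertical ⊤ e)
    (hfix : A.actE γ e = e) {x : G.V} (hx : x ∈ G.ends e) : A.actV γ x = x := by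
  obtain ⟨y, hy⟩ : ∃ y, G.ends e = s(x, y) := ⟨_, (Sym2.other_spec hx).symm⟩
  have : s(A.actV γ x, A.actV γ y) = s(x, y) := by
    rw [← Sym2.map_mk, ← hy, ← A.ends_map, hfix]
  rcases Sym2.eq_iff.1 this with ⟨h, -⟩ | ⟨h, -⟩
  · exact h
  · exact absurd ⟨x, y, hy, γ, Subgroup.mem_top γ, h⟩ hv

theorem zpow_actV_eq_self {γ : Γ} {x : G.V} (hx : A.actV γ x = x) {δ : Γ}
    (hδ : δ ∈ Subgroup.zpowers γ) : A.actV δ x = x := by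
  obtain ⟨k, rfl⟩ := hδ
  rw [map_zpow]
  exact Equiv.Perm.zpow_apply_eq_self_of_apply_eq_self hx k

theorem zpow_actE_eq_self {γ : Γ} {e : G.E} (he : A.actE γ e = e) {δ : Γ}
    (hδ : δ ∈ Subgroup.zpowers γ) : A.actE δ e = e := by
  obtain ⟨k, rfl⟩ := hδ
  rw [map_zpow]
  exact Equiv.Perm.zpow_apply_eq_self_of_apply_eq_self he k

/-- Harmonicity of `G → G/⟨γ⟩` at `w`: the `⟨γ⟩`-orbit of the fixed edge `f` meets the edges
at `w` only in `f`, so the orbit of `h`, which contains `γ⁻¹ h`, meets them only in `h`. -/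
theorem actE_eq_self_of_quotHarmonic {γ : Γ} (hA : A.QuotHarmonic (Subgroup.zpowers γ))
    {w : G.V} (hw : A.actV γ w = w) {f : G.E} (hf : A.actE γ f = f) (hwf : w ∈ G.ends f)
    {h : G.E} (hwh : w ∈ G.ends h) : A.actE γ h = h := by
  set Δ := Subgroup.zpowers γ
  have hnv {e : G.E} (hwe : w ∈ G.ends e) : ¬A.Vertical Δ e := by
    rintro ⟨a, b, hab, δ, hδ, hδab⟩
    have hne : a ≠ b := fun h => G.loopless e (hab ▸ Sym2.mk_isDiag_iff.2 h)
    have hδw := A.zpow_actV_eq_self hw hδ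
    rcases Sym2.mem_iff.1 (hab ▸ hwe) with rfl | rfl
    · exact hne (hδw ▸ hδab)
    · exact hne ((A.actV δ).injective (hδab.trans hδw.symm))
  have hone : Nat.card {p // w ∈ G.ends p ∧ A.erel Δ p f} = 1 := by
    refine Nat.card_eq_one_iff_unique.2
      ⟨⟨fun ⟨p, _, δ, hδ, hp⟩ ⟨q, _, ε, hε, hq⟩ => ?_⟩, ⟨⟨f, hwf, 1, Δ.one_mem, by simp⟩⟩⟩
    have hp' : p = f := (A.actE δ).injective (hp.trans (A.zpow_actE_eq_self hf hδ).symm)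
    have hq' : q = f := (A.actE ε).injective (hq.trans (A.zpow_actE_eq_self hf hε).symm)
    subst hp' hq'
    rfl
  have hcard := hA w f h (hnv hwf) (hnv hwh) ⟨w, hwf, 1, Δ.one_mem, by simp⟩
    ⟨w, hwh, 1, Δ.one_mem, by simp⟩
  have hsub := (Nat.card_eq_one_iff_unique.1 (hcard.symm.trans hone)).1
  have hw' : A.actV γ⁻¹ w = w := A.zpow_actV_eq_self hw (Δ.inv_mem (Subgroup.mem_zpowers γ))
  have hmem : w ∈ G.ends (A.actE γ⁻¹ h) := hw' ▸ (A.mem_ends_actE_iff).2 hwh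
  have : A.actE γ⁻¹ h = h := congrArg Subtype.val <| hsub.elim
    ⟨A.actE γ⁻¹ h, hmem, γ, Subgroup.mem_zpowers γ, by simp⟩ ⟨h, hwh, 1, Δ.one_mem, by simp⟩
  rw [map_inv] at this
  exact (Equiv.Perm.inv_eq_iff_eq.1 this).symm

theorem eq_one_of_actE_eq_self (hA : A.ActsHarmonically) {γ : Γ} {e₀ : G.E}
    (hv : ¬A.Vertical ⊤ e₀) (hγ : A.actE γ e₀ = e₀) : γ = 1 := by
  have hharm := (hA (Subgroup.zpowers γ)).1
  have hx₀ := Sym2.out_fst_mem (G.ends e₀)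
  have hall : ∀ x, A.actV γ x = x ∧ ∃ f, A.actE γ f = f ∧ x ∈ G.ends f :=
    G.edge_induction ⟨A.actV_eq_self_of_not_vertical hv hγ hx₀, e₀, hγ, hx₀⟩
      fun e x y he ⟨hx, f, hf, hxf⟩ => by
        have hfix := A.actE_eq_self_of_quotHarmonic hharm hx hf hxf (he ▸ Sym2.mem_mk_left x y)
        exact ⟨A.actV_eq_self_of_actE_eq_self he hfix hx, e, hfix, he ▸ Sym2.mem_mk_right x y⟩
  refine A.faithful γ (fun x => (hall x).1) fun e => ?_
  obtain ⟨hfix, f, hf, hxf⟩ := hall (G.ends e).out.1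
  exact A.actE_eq_self_of_quotHarmonic hharm hfix hf hxf (Sym2.out_fst_mem _)

theorem vertical_actE {γ : Γ} {e : G.E} (he : A.Vertical ⊤ e) :
    A.Vertical ⊤ (A.actE γ e) := by
  obtain ⟨a, b, hab, δ, -, hδ⟩ := he
  refine ⟨A.actV γ a, A.actV γ b, by rw [A.ends_map, hab, Sym2.map_mk], γ * δ * γ⁻¹,
    Subgroup.mem_top _, ?_⟩
  simp [hδ]

theorem vertical_actE_iff (γ : Γ) (e : G.E) : A.Vertical ⊤ (A.actE γ e) ↔ A.Vertical ⊤ e :=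
  ⟨fun h => by simpa using A.vertical_actE (γ := γ⁻¹) h, A.vertical_actE⟩

theorem card_not_vertical (hA : A.ActsHarmonically) :
    Nat.card {e // ¬A.Vertical ⊤ e} = Nat.card (A.quotE ⊤) * Nat.card Γ := by
  refine card_eq_card_quotient_mul _
    (fun γ e => ⟨A.actE γ e.1, (A.vertical_actE_iff γ e.1).not.2 e.2⟩) (fun a b => ?_)
    fun a γ δ h => ?_
  · show A.erel ⊤ a b ↔ _
    simp [erel, Subtype.ext_iff]
  · have : A.actE (δ⁻¹ * γ) a.1 = a.1 := by
      simpa [Equiv.symm_apply_eq] using congrArg Subtype.val h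
    exact (inv_mul_eq_one.1 (A.eq_one_of_actE_eq_self hA a.2 this)).symm

theorem card_le_card_quotV_mul : Nat.card G.V ≤ Nat.card (A.quotV ⊤) * Nat.card Γ :=
  have := A.finite
  card_le_card_quotient_mul _ (fun γ x => A.actV γ x) fun a b => by
    show A.vrel ⊤ a b ↔ _
    simp [vrel]

/-- The `|Γ|` non-vertical edges over each edge of `G/Γ` already account for all of
`|E(G)| = |V(G)| ≤ |V(G/Γ)| |Γ| = |E(G/Γ)| |Γ|`, so nothing is vertical and every vertex orbit
is full. -/
theorem not_vertical_and_horizUnramified (hA : A.ActsHarmonically) (hg : G.genus = 1)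
    (hq : A.quotGenus ⊤ = 1) : (∀ e, ¬A.Vertical ⊤ e) ∧ A.HorizUnramified ⊤ := by
  have := A.finite
  have hsplit :
      Nat.card {e // A.Vertical ⊤ e} + Nat.card {e // ¬A.Vertical ⊤ e} = Nat.card G.E :=
    Nat.card_sum.symm.trans (Nat.card_congr (Equiv.sumCompl _))
  have hEV : Nat.card G.E = Nat.card G.V := by
    simp only [Multigraph.genus, Nat.card_eq_fintype_card] at hg ⊢
    omega
  have hq' : Nat.card (A.quotE ⊤) = Nat.card (A.quotV ⊤) := by
    simp only [quotGenus] at hq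
    omega
  have hV := A.card_le_card_quotV_mul
  rw [A.card_not_vertical hA, hq'] at hsplit
  refine ⟨fun e he => ?_, fun x γ _ hx => ?_⟩
  · have : 0 < Nat.card {e // A.Vertical ⊤ e} :=
      Nat.card_pos_iff.2 ⟨⟨⟨e, he⟩⟩, inferInstance⟩
    omega
  · refine injective_of_card_eq_card_quotient_mul (A.vSetoid ⊤) (fun γ x => A.actV γ x)
      (fun a b => ?_) (fun γ δ x => by simp) (show _ = Nat.card (A.quotV ⊤) * _ by omega) x
      (show A.actV γ x = A.actV 1 x by simpa using hx)
    show A.vrel ⊤ a b ↔ _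
    simp [vrel]

theorem ram_eq_zero {Δ : Subgroup Γ} (hh : A.HorizUnramified Δ) (hv : ∀ e, ¬A.Vertical Δ e) :
    A.ram Δ = 0 := by
  have hr (y : A.quotV Δ) : A.r Δ y = 1 := by
    rw [r, stabOrder, Nat.card_eq_one_iff_unique]
    exact ⟨⟨fun a b => Subtype.ext ((hh _ _ a.2.1 a.2.2).trans (hh _ _ b.2.1 b.2.2).symm)⟩,
      ⟨⟨1, Δ.one_mem, by simp⟩⟩⟩
  have hw (y : A.quotV Δ) : A.w Δ y = 0 := by
    have : IsEmpty {e // y.out ∈ G.ends e ∧ A.Vertical Δ e} := ⟨fun e => hv e.1 e.2.2⟩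
    rw [w, vertMult, Nat.card_of_isEmpty, Nat.zero_div]
  simp [ram, hr, hw]

theorem isCycleSet_preimage_actE {C : Set G.E} (hC : G.IsCycleSet C) (γ : Γ) :
    G.IsCycleSet (A.actE γ ⁻¹' C) := by
  refine ⟨(hC.1.preimage (A.actE γ).surjective), fun x => ?_⟩
  rw [Nat.card_congr (Equiv.subtypeEquiv (A.actE γ)
    (q := fun f => f ∈ C ∧ A.actV γ x ∈ G.ends f) fun e => by simp [A.mem_ends_actE_iff])]
  exact hC.2 _

theorem actE_mem_iff_of_isCycleSet {C : Set G.E} (hg : G.genus ≤ 1) (hC : G.IsCycleSet C)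
    (γ : Γ) (e : G.E) :
    A.actE γ e ∈ C ↔ e ∈ C := by
  rw [← Set.mem_preimage, (A.isCycleSet_preimage_actE hC γ).eq hg hC]

open Multigraph

variable {C : Set G.E}

abbrev dartAction (hinv : ∀ γ e, e ∈ C → A.actE γ e ∈ C) : MulAction Γ (Dart G C) where
  smul γ d := ⟨A.actV γ d.vertex, A.actE γ d.edge, hinv γ _ d.edge_mem,
    A.mem_ends_actE_iff.2 d.vertex_mem⟩
  one_smul d :=
    Dart.ext (congrArg (· d.vertex) (map_one A.actV)) (congrArg (· d.edge) (map_one A.actE))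
  mul_smul γ δ d :=
    Dart.ext (congrArg (· d.vertex) (map_mul A.actV γ δ))
      (congrArg (· d.edge) (map_mul A.actE γ δ))

theorem isCyclic_of_isCycleSet (hg : G.genus ≤ 1) (hnv : ∀ e, ¬A.Vertical ⊤ e)
    (hh : A.HorizUnramified ⊤) (hC : G.IsCycleSet C) : IsCyclic Γ := by
  let _ := A.dartAction fun γ e => (A.actE_mem_iff_of_isCycleSet hg hC γ e).2
  let σ : Equiv.Perm (Dart G C) := Function.Involutive.toPerm _ (Dart.flipEdge_flipEdge hC)
  let τ : Equiv.Perm (Dart G C) := Function.Involutive.toPerm _ Dart.flipVertex_flipVertex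
  have hσ : σ * σ = 1 := Equiv.ext (Dart.flipEdge_flipEdge hC)
  have hτ : τ * τ = 1 := Equiv.ext Dart.flipVertex_flipVertex
  have hσc (γ : Γ) (d : Dart G C) : γ • σ d = σ (γ • d) :=
    (Dart.eq_or_eq_flipEdge hC (d := γ • σ d) (d' := γ • d) rfl).resolve_left
      fun h => Dart.flipEdge_ne hC d (MulAction.injective γ h)
  have hτc (γ : Γ) (d : Dart G C) : γ • τ d = τ (γ • d) :=
    (Dart.eq_or_eq_flipVertex (d := γ • τ d) (d' := γ • d) rfl).resolve_left
      fun h => Dart.flipVertex_ne d (MulAction.injective γ h)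
  have hfree (γ : Γ) (d : Dart G C) (h : γ • d = d) : γ = 1 :=
    hh d.vertex γ (Subgroup.mem_top γ) (congrArg Dart.vertex h)
  obtain ⟨e, he⟩ := hC.1
  let d₀ : Dart G C := ⟨_, e, he, Sym2.out_fst_mem _⟩
  refine isCyclic_of_forall_mem_dihedralOrbit σ τ hσ hτ hσc hτc d₀
    (Dart.mem_of_flip_closed hC hg ⟨d₀, self_mem_dihedralOrbit σ τ d₀⟩
      (fun d hd => (apply_mem_dihedralOrbit hσ hτ hd).1)
      fun d hd => (apply_mem_dihedralOrbit hσ hτ hd).2)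
    (hfree · d₀) (fun γ d h => ?_) fun γ d h => ?_
  · obtain rfl := hh d.vertex γ (Subgroup.mem_top γ) (congrArg Dart.vertex h)
    exact Dart.flipEdge_ne hC d ((one_smul Γ d).symm.trans h).symm
  · exact hnv d.edge ⟨d.vertex, _, (Sym2.other_spec d.vertex_mem).symm, γ, Subgroup.mem_top γ,
      congrArg Dart.vertex h⟩

theorem card_dvd_and_lt_card_cycle_vertices (hnv : ∀ e, ¬A.Vertical ⊤ e)
    (hh : A.HorizUnramified ⊤) (hinv : ∀ γ e, e ∈ C → A.actE γ e ∈ C) (hC : C.Nonempty) :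
    Nat.card Γ ∣ Nat.card {x : G.V // ∃ e ∈ C, x ∈ G.ends e} ∧
      Nat.card Γ < Nat.card {x : G.V // ∃ e ∈ C, x ∈ G.ends e} := by
  have := A.finite
  let s := (A.vSetoid ⊤).comap (Subtype.val : {x : G.V // ∃ e ∈ C, x ∈ G.ends e} → G.V)
  have hcard := card_eq_card_quotient_mul s
    (fun γ x => ⟨A.actV γ x.1,
      have ⟨e, he, hx⟩ := x.2; ⟨_, hinv γ e he, A.mem_ends_actE_iff.2 hx⟩⟩)
    (fun a b => ?_) (fun x γ δ h => ?_)
  rotate_left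
  · show A.vrel ⊤ a b ↔ _
    simp [vrel, Subtype.ext_iff]
  · have : A.actV (δ⁻¹ * γ) x.1 = x.1 := by
      simpa [Equiv.symm_apply_eq] using congrArg Subtype.val h
    exact (inv_mul_eq_one.1 (hh _ _ (Subgroup.mem_top _) this)).symm
  obtain ⟨e, he⟩ := hC
  obtain ⟨x, y, -, hends⟩ := G.exists_ends_eq e
  have hq : 1 < Nat.card (Quotient s) := Finite.one_lt_card_iff_nontrivial.2
    ⟨Quotient.mk s ⟨x, e, he, hends ▸ Sym2.mem_mk_left x y⟩,
      Quotient.mk s ⟨y, e, he, hends ▸ Sym2.mem_mk_right x y⟩,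
      fun h => hnv e ⟨x, y, hends, Quotient.exact h⟩⟩
  refine ⟨hcard ▸ Dvd.intro_left _ rfl, ?_⟩
  rw [hcard]
  exact lt_mul_left Nat.card_pos hq

end GraphAction

/-- If `Γ` acts harmonically on a graph `G` of genus 1 and the quotient
`G/Γ` also has genus 1, then the quotient map is unramified (`R = 0`), `Γ` is cyclic and
acts by rotations of the unique cycle of `G` (it preserves the cycle and acts freely on
its vertices), and `|Γ|` is a strict divisor of the number of vertices of the cycle. -/
theorem genus_one_quotient_genus_one {Γ : Type} [Group Γ] {G : Multigraph}
    (A : GraphAction Γ G) (hA : A.ActsHarmonically)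
    (hg : G.genus = 1) (hq : A.quotGenus ⊤ = 1) :
    A.ram ⊤ = 0 ∧ IsCyclic Γ ∧
    ∀ C : Set G.E, G.IsCycleSet C →
      (∀ (γ : Γ) (e : G.E), e ∈ C → A.actE γ e ∈ C) ∧
      (∀ γ : Γ, γ ≠ 1 → ∀ x : G.V, (∃ e ∈ C, x ∈ G.ends e) → A.actV γ x ≠ x) ∧
      Nat.card Γ ∣ Nat.card {x : G.V // ∃ e ∈ C, x ∈ G.ends e} ∧
      Nat.card Γ < Nat.card {x : G.V // ∃ e ∈ C, x ∈ G.ends e} := by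
  obtain ⟨hnv, hh⟩ := A.not_vertical_and_horizUnramified hA hg hq
  obtain ⟨C₀, hC₀⟩ := G.exists_isCycleSet hg
  refine ⟨A.ram_eq_zero hh hnv, A.isCyclic_of_isCycleSet hg.le hnv hh hC₀, fun C hC => ?_⟩
  have hinv (γ : Γ) (e : G.E) : e ∈ C → A.actE γ e ∈ C :=
    (A.actE_mem_iff_of_isCycleSet hg.le hC γ e).2
  exact ⟨hinv, fun γ hγ x _ hx => hγ (hh x γ (Subgroup.mem_top γ) hx),
    A.card_dvd_and_lt_card_cycle_vertices hnv hh hinv hC.1⟩
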